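/- Let m > 0 and let B be a real symmetric positive definite 3×3 matrix. Define the microscopic kinetic energy E(p, ς) = m⁻¹ (p · p) + ς · B⁻¹ ς for p, ς ∈ ℝ³. A continuous function f : ℝ³ × ℝ³ → (0, ∞) satisfies f(p₁, ς₁) f(p₂, ς₂) = f(p₁', ς₁') f(p₂', ς₂') for all tuples (p₁, ς₁, p₂, ς₂, p₁', ς₁', p₂', ς₂') with p₁ + p₂ = p₁' + p₂', ς₁ + ς₂ = ς₁' + ς₂', and E(p₁, ς₁) + E(p₂, ς₂) = E(p₁', ς₁') + E(p₂', ς₂') if and only if there exist a, δ ∈ ℝ and b, c ∈ ℝ³ such that f(p, ς) = exp(a + b · p + c · ς + δ E(p, ς)) for all p, ς ∈ ℝ³. -/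

import Mathlib

/-!
Taking logarithms, `g = log f - log f(0)` is additive on every pair `x, y` of phase-space points
that are orthogonal for the bilinear form `β` polarizing the kinetic energy, since the collision
`(x + y, 0) ↦ (x, y)` is then admissible. A continuous orthogonally additive function on a space of
dimension at least three is a linear functional plus a multiple of `β x x`: its odd part is
additive (split off the component along one vector and solve Cauchy's equation on lines), while
its even part depends only on `β x x` and is additive in that variable.
-/

open Matrix Module

lemma eq_mul_of_map_add_of_nonneg {h : ℝ → ℝ} (hc : Continuous h)
    (hadd : ∀ s t, 0 ≤ s → 0 ≤ t → h (s + t) = h s + h t) {t : ℝ} (ht : 0 ≤ t) :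
    h t = t * h 1 := by
  have h0 : h 0 = 0 := by simpa using hadd 0 0 le_rfl le_rfl
  have hadd₃ : ∀ a b c : ℝ, 0 ≤ a → 0 ≤ b → 0 ≤ c → h (a + (b + c)) = h a + h b + h c :=
    fun a b c ha hb hc => by rw [hadd _ _ ha (add_nonneg hb hc), hadd _ _ hb hc, add_assoc]
  -- `t ↦ h t⁺ - h t⁻` is an additive extension of `h` to all of `ℝ`.
  let H : ℝ →+ ℝ :=
    { toFun := fun t => h t⁺ - h t⁻
      map_zero' := by simp
      map_add' := fun s t => by
        have key : (s + t)⁺ + (s⁻ + t⁻) = (s + t)⁻ + (s⁺ + t⁺) := by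
          linarith [posPart_sub_negPart (s + t), posPart_sub_negPart s, posPart_sub_negPart t]
        have := congrArg h key
        rw [hadd₃ _ _ _ (posPart_nonneg _) (negPart_nonneg _) (negPart_nonneg _),
          hadd₃ _ _ _ (negPart_nonneg _) (posPart_nonneg _) (posPart_nonneg _)] at this
        linarith }
  have hH : Continuous H := (hc.comp continuous_posPart).sub (hc.comp continuous_negPart)
  have hHh : ∀ t, 0 ≤ t → H t = h t := fun t ht => by
    simp [H, posPart_eq_self.2 ht, negPart_eq_zero.2 ht, h0]
  rw [← hHh t ht, ← hHh 1 zero_le_one, ← smul_eq_mul, ← map_real_smul H hH, smul_eq_mul, mul_one]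

namespace LinearMap.BilinForm

variable {V : Type*} [AddCommGroup V] [Module ℝ V] {β : LinearMap.BilinForm ℝ V}

lemma exists_orthogonal_apply_self_eq [FiniteDimensional ℝ V] (hV : 2 < finrank ℝ V)
    (hpos : ∀ x, x ≠ 0 → 0 < β x x) (x y : V) {r : ℝ} (hr : 0 ≤ r) :
    ∃ w, β x w = 0 ∧ β y w = 0 ∧ β w w = r := by
  have hker : ker ((β x).prod (β y)) ≠ ⊥ :=
    ker_ne_bot_of_finrank_lt (by simpa using hV)
  obtain ⟨z, hz, hz0⟩ := Submodule.exists_mem_ne_zero_of_ne_bot hker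
  simp only [mem_ker, prod_apply, Function.prod, Prod.mk_eq_zero] at hz
  have hzz := hpos z hz0
  refine ⟨√(r / β z z) • z, by simp [hz.1], by simp [hz.2], ?_⟩
  rw [map_smul, map_smul, smul_apply, smul_eq_mul, smul_eq_mul, ← mul_assoc,
    Real.mul_self_sqrt (div_nonneg hr hzz.le), div_mul_cancel₀ _ hzz.ne']

lemma apply_self_nonneg (hpos : ∀ x, x ≠ 0 → 0 < β x x) (x : V) : 0 ≤ β x x := by
  rcases eq_or_ne x 0 with rfl | hx
  · simp
  · exact (hpos x hx).le

lemma apply_add_self_of_isOrtho (hβ : β.IsSymm) {x y : V} (hxy : β x y = 0) :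
    β (x + y) (x + y) = β x x + β y y := by
  simp [hxy, hβ.eq y x]

end LinearMap.BilinForm

section OrthogonallyAdditive

variable {V : Type*} [AddCommGroup V] [Module ℝ V]

def IsOrthogonallyAdditive (β : LinearMap.BilinForm ℝ V) (G : V → ℝ) : Prop :=
  ∀ x y, β x y = 0 → G (x + y) = G x + G y

namespace IsOrthogonallyAdditive

open LinearMap.BilinForm

variable {β : LinearMap.BilinForm ℝ V} {G G' : V → ℝ}

lemma add (hG : IsOrthogonallyAdditive β G) (hG' : IsOrthogonallyAdditive β G') :
    IsOrthogonallyAdditive β (G + G') := fun x y hxy => by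
  simp only [Pi.add_apply, hG x y hxy, hG' x y hxy]; ring

lemma sub (hG : IsOrthogonallyAdditive β G) (hG' : IsOrthogonallyAdditive β G') :
    IsOrthogonallyAdditive β (G - G') := fun x y hxy => by
  simp only [Pi.sub_apply, hG x y hxy, hG' x y hxy]; ring

lemma comp_neg (hG : IsOrthogonallyAdditive β G) : IsOrthogonallyAdditive β (G ∘ Neg.neg) :=
  fun x y hxy => by
    simp only [Function.comp_apply, neg_add]
    exact hG (-x) (-y) (by simpa using hxy)

lemma map_zero (hG : IsOrthogonallyAdditive β G) : G 0 = 0 := by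
  simpa using hG 0 0 (by simp)

lemma eq_of_even_of_apply_self_eq (hβ : β.IsSymm) (hG : IsOrthogonallyAdditive β G)
    (heven : ∀ x, G (-x) = G x) {x y : V} (hxy : β x x = β y y) : G x = G y := by
  set u := (2⁻¹ : ℝ) • x
  set v := (2⁻¹ : ℝ) • y
  -- `x` and `y` are both sums of `u + v` with a vector orthogonal to it, namely `±(u - v)`.
  have horth : β (u + v) (u - v) = 0 := by
    simp only [u, v, map_add, map_sub, map_smul, LinearMap.add_apply,
      LinearMap.smul_apply, smul_eq_mul, hβ.eq y x, hxy]
    ring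
  calc G x = G (u + v + (u - v)) := by congr 1; module
    _ = G (u + v) + G (-(u - v)) := by rw [hG _ _ horth, heven]
    _ = G (u + v + -(u - v)) := (hG _ _ (by rw [map_neg, horth, neg_zero])).symm
    _ = G y := by congr 1; module

variable [FiniteDimensional ℝ V] (hβ : β.IsSymm) (hpos : ∀ x, x ≠ 0 → 0 < β x x)
  (hV : 2 < finrank ℝ V)
include hβ hpos hV

lemma map_add_of_odd_of_nonneg (hG : IsOrthogonallyAdditive β G) (hodd : ∀ x, G (-x) = -G x)
    {x y : V} (hxy : 0 ≤ β x y) : G (x + y) = G x + G y := by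
  obtain ⟨w, hxw, hyw, hww⟩ := exists_orthogonal_apply_self_eq hV hpos x y hxy
  have hwy : β w y = 0 := by rw [hβ.eq, hyw]
  calc G (x + y) = G ((x + w) + (y - w)) := by rw [add_add_sub_cancel]
    _ = G x + G w + (G y + G (-w)) := by
      rw [hG _ _ (by simp [hxw, hwy, hww]), hG x w hxw, sub_eq_add_neg, hG y (-w) (by simp [hyw])]
    _ = G x + G y := by rw [hodd]; ring

lemma map_smul_of_odd [TopologicalSpace V] [ContinuousSMul ℝ V] (hG : IsOrthogonallyAdditive β G)
    (hc : Continuous G) (hodd : ∀ x, G (-x) = -G x) (t : ℝ) (a : V) : G (t • a) = t * G a := by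
  have hnonneg : ∀ t : ℝ, 0 ≤ t → G (t • a) = t * G a := fun t ht => by
    simpa using eq_mul_of_map_add_of_nonneg (h := fun t : ℝ => G (t • a)) (by fun_prop)
      (fun s t hs ht => by
        rw [add_smul]
        refine hG.map_add_of_odd_of_nonneg hβ hpos hV hodd ?_
        simpa [← mul_assoc] using mul_nonneg (mul_nonneg ht hs) (apply_self_nonneg hpos a)) ht
  rcases le_or_gt 0 t with ht | ht
  · exact hnonneg t ht
  · rw [← neg_neg t, neg_smul, hodd, hnonneg _ (by linarith)]
    ring

lemma map_add_of_odd [TopologicalSpace V] [ContinuousSMul ℝ V] (hG : IsOrthogonallyAdditive β G)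
    (hc : Continuous G) (hodd : ∀ x, G (-x) = -G x) (x y : V) : G (x + y) = G x + G y := by
  rcases eq_or_ne y 0 with rfl | hy
  · simp [hG.map_zero]
  set t := β x y / β y y
  have hsplit : ∀ s : ℝ, G (x - t • y + s • y) = G (x - t • y) + s * G y := fun s => by
    rw [hG _ _ (by simp [t, div_mul_cancel₀ _ (hpos y hy).ne']),
      hG.map_smul_of_odd hβ hpos hV hc hodd]
  have h1 := hsplit (t + 1)
  have h2 := hsplit t
  rw [show x - t • y + (t + 1) • y = x + y by module] at h1
  rw [sub_add_cancel] at h2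
  linarith

lemma exists_linearMap_eq_of_odd [TopologicalSpace V] [ContinuousSMul ℝ V]
    (hG : IsOrthogonallyAdditive β G) (hc : Continuous G) (hodd : ∀ x, G (-x) = -G x) :
    ∃ L : V →ₗ[ℝ] ℝ, ⇑L = G :=
  ⟨{ toFun := G
     map_add' := hG.map_add_of_odd hβ hpos hV hc hodd
     map_smul' := hG.map_smul_of_odd hβ hpos hV hc hodd }, rfl⟩

lemma exists_eq_mul_apply_self_of_even [TopologicalSpace V] [ContinuousSMul ℝ V]
    (hG : IsOrthogonallyAdditive β G) (hc : Continuous G) (heven : ∀ x, G (-x) = G x) :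
    ∃ δ : ℝ, ∀ x, G x = δ * β x x := by
  obtain ⟨u, -, -, hu⟩ := exists_orthogonal_apply_self_eq hV hpos 0 0 zero_le_one
  obtain ⟨v, huv, -, hv⟩ := exists_orthogonal_apply_self_eq hV hpos u u zero_le_one
  have hsqrt : ∀ {w : V}, β w w = 1 → ∀ {s : ℝ}, 0 ≤ s → β (√s • w) (√s • w) = s :=
    fun hw s hs => by simp [hw, Real.mul_self_sqrt hs]
  set φ : ℝ → ℝ := fun s => G (√s • u)
  have hGφ : ∀ x, G x = φ (β x x) := fun x =>
    hG.eq_of_even_of_apply_self_eq hβ heven (hsqrt hu (apply_self_nonneg hpos x)).symm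
  have hφ : ∀ s t : ℝ, 0 ≤ s → 0 ≤ t → φ (s + t) = φ s + φ t := fun s t hs ht => by
    have horth : β (√s • u) (√t • v) = 0 := by simp [huv]
    have hsum : β (√s • u + √t • v) (√s • u + √t • v) = s + t := by
      rw [apply_add_self_of_isOrtho hβ horth, hsqrt hu hs, hsqrt hv ht]
    rw [← hsum, ← hGφ, hG _ _ horth, hGφ (√t • v), hsqrt hv ht]
  refine ⟨φ 1, fun x => ?_⟩
  rw [hGφ, eq_mul_of_map_add_of_nonneg (by fun_prop) hφ (apply_self_nonneg hpos x), mul_comm]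

theorem exists_eq_linearMap_add_mul_apply_self [TopologicalSpace V] [IsTopologicalAddGroup V]
    [ContinuousSMul ℝ V] (hG : IsOrthogonallyAdditive β G) (hc : Continuous G) :
    ∃ (L : V →ₗ[ℝ] ℝ) (δ : ℝ), ∀ x, G x = L x + δ * β x x := by
  obtain ⟨L, hL⟩ := (hG.sub hG.comp_neg).exists_linearMap_eq_of_odd hβ hpos hV
    (hc.sub (hc.comp continuous_neg)) fun x => by simp
  obtain ⟨δ, hδ⟩ := (hG.add hG.comp_neg).exists_eq_mul_apply_self_of_even hβ hpos hV
    (hc.add (hc.comp continuous_neg)) fun x => by simp [add_comm]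
  refine ⟨(2⁻¹ : ℝ) • L, δ / 2, fun x => ?_⟩
  have hodd := congrFun hL x
  have heven := hδ x
  simp only [Pi.sub_apply, Pi.add_apply, Function.comp_apply] at hodd heven
  simp only [LinearMap.smul_apply, smul_eq_mul]
  linarith

end IsOrthogonallyAdditive

end OrthogonallyAdditive

section KineticForm

variable {ι κ : Type*} [Fintype ι] [DecidableEq ι] [Fintype κ] [DecidableEq κ]
  {A : Matrix ι ι ℝ} {C : Matrix κ κ ℝ}

/-- With `A = m⁻¹ • 1` and `C = B⁻¹`, the diagonal `kineticForm A C (p, ς) (p, ς)` is `E p ς`. -/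
def kineticForm (A : Matrix ι ι ℝ) (C : Matrix κ κ ℝ) :
    LinearMap.BilinForm ℝ ((ι → ℝ) × (κ → ℝ)) :=
  (toBilin' A).compl₁₂ (.fst ℝ _ _) (.fst ℝ _ _) + (toBilin' C).compl₁₂ (.snd ℝ _ _) (.snd ℝ _ _)

@[simp]
lemma kineticForm_apply (A : Matrix ι ι ℝ) (C : Matrix κ κ ℝ) (x y : (ι → ℝ) × (κ → ℝ)) :
    kineticForm A C x y = x.1 ⬝ᵥ A *ᵥ y.1 + x.2 ⬝ᵥ C *ᵥ y.2 := by
  simp [kineticForm, toBilin'_apply']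

lemma isSymm_kineticForm (hA : A.IsSymm) (hC : C.IsSymm) : (kineticForm A C).IsSymm := by
  refine ⟨fun x y => ?_⟩
  simp only [kineticForm_apply, ← toBilin'_apply', (isSymm_toBilin'_iff_isSymm.2 hA).eq x.1,
    (isSymm_toBilin'_iff_isSymm.2 hC).eq x.2]

lemma kineticForm_apply_self_pos (hA : A.PosDef) (hC : C.PosDef) {x : (ι → ℝ) × (κ → ℝ)}
    (hx : x ≠ 0) : 0 < kineticForm A C x x := by
  have h₁ := hA.posSemidef.dotProduct_mulVec_nonneg x.1
  have h₂ := hC.posSemidef.dotProduct_mulVec_nonneg x.2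
  simp only [star_trivial] at h₁ h₂
  rw [kineticForm_apply]
  rcases ne_or_eq x.1 0 with hx₁ | hx₁
  · linarith [by simpa using hA.dotProduct_mulVec_pos hx₁]
  · have hx₂ : x.2 ≠ 0 := fun hx₂ => hx (Prod.ext hx₁ hx₂)
    linarith [by simpa using hC.dotProduct_mulVec_pos hx₂]

lemma exists_dotProduct_add_dotProduct (L : ((ι → ℝ) × (κ → ℝ)) →ₗ[ℝ] ℝ) :
    ∃ (b : ι → ℝ) (c : κ → ℝ), ∀ p ς, L (p, ς) = b ⬝ᵥ p + c ⬝ᵥ ς := by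
  obtain ⟨b, hb⟩ := (dotProductEquiv ℝ ι).surjective (L ∘ₗ .inl ℝ _ _)
  obtain ⟨c, hc⟩ := (dotProductEquiv ℝ κ).surjective (L ∘ₗ .inr ℝ _ _)
  refine ⟨b, c, fun p ς => ?_⟩
  rw [← LinearMap.coprod_comp_inl_inr L, ← hb, ← hc]
  simp

end KineticForm

/-- Maxwellian characterization (Theorem 3.7): a continuous positive one-particle
distribution satisfies the detailed-balance identity
`f(p₁,ς₁) f(p₂,ς₂) = f(p₁',ς₁') f(p₂',ς₂')` on the collision manifold determined
by conservation of linear momentum, conjugate order-parameter momentum, and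
kinetic energy, if and only if it is a Maxwellian
`f = exp(a + b·p + c·ς + δ E(p,ς))`. -/
theorem maxwellian_characterization
    (m : ℝ) (hm : 0 < m)
    (B : Matrix (Fin 3) (Fin 3) ℝ)
    (hBsym : Bᵀ = B)
    (hBpos : ∀ x : Fin 3 → ℝ, x ≠ 0 → 0 < x ⬝ᵥ B.mulVec x)
    (E : (Fin 3 → ℝ) → (Fin 3 → ℝ) → ℝ)
    (hE : ∀ p ς, E p ς = m⁻¹ * (p ⬝ᵥ p) + ς ⬝ᵥ B⁻¹.mulVec ς)
    (f : (Fin 3 → ℝ) × (Fin 3 → ℝ) → ℝ)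
    (hfcont : Continuous f)
    (hfpos : ∀ q, 0 < f q) :
    (∀ p₁ ς₁ p₂ ς₂ p₁' ς₁' p₂' ς₂' : Fin 3 → ℝ,
      p₁ + p₂ = p₁' + p₂' → ς₁ + ς₂ = ς₁' + ς₂' →
      E p₁ ς₁ + E p₂ ς₂ = E p₁' ς₁' + E p₂' ς₂' →
      f (p₁, ς₁) * f (p₂, ς₂) = f (p₁', ς₁') * f (p₂', ς₂'))
    ↔ ∃ (a δ : ℝ) (b c : Fin 3 → ℝ), ∀ p ς : Fin 3 → ℝ,
        f (p, ς) = Real.exp (a + b ⬝ᵥ p + c ⬝ᵥ ς + δ * E p ς) := by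
  have hB : B.PosDef := .of_dotProduct_mulVec_pos (isHermitian_iff_isSymm.2 hBsym) fun x hx => by
    simpa using hBpos x hx
  have hA : (m⁻¹ • 1 : Matrix (Fin 3) (Fin 3) ℝ).PosDef := PosDef.one.smul (inv_pos.2 hm)
  set β := kineticForm (m⁻¹ • 1 : Matrix (Fin 3) (Fin 3) ℝ) B⁻¹
  have hβ : β.IsSymm := isSymm_kineticForm (isHermitian_iff_isSymm.1 hA.isHermitian)
    (isHermitian_iff_isSymm.1 hB.inv.isHermitian)
  have hEβ : ∀ x, E x.1 x.2 = β x x := fun x => by simp [β, hE, smul_mulVec]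
  constructor
  · intro hcol
    -- A collision `(x + y, 0) ↦ (x, y)` conserves energy exactly when `x ⊥ y`.
    have horth : IsOrthogonallyAdditive β fun x => Real.log (f x) - Real.log (f 0) := by
      intro x y hxy
      have hcollision : f (x + y) * f 0 = f x * f y :=
        hcol (x + y).1 (x + y).2 0 0 x.1 x.2 y.1 y.2 (add_zero _) (add_zero _) (by
          rw [hEβ (x + y), hEβ x, hEβ y, LinearMap.BilinForm.apply_add_self_of_isOrtho hβ hxy]
          simp [hE])
      have hlog := congrArg Real.log hcollision
      rw [Real.log_mul (hfpos _).ne' (hfpos _).ne',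
        Real.log_mul (hfpos _).ne' (hfpos _).ne'] at hlog
      linarith
    obtain ⟨L, δ, hL⟩ := horth.exists_eq_linearMap_add_mul_apply_self hβ
      (fun x hx => kineticForm_apply_self_pos hA hB.inv hx) (by simp)
      ((hfcont.log fun q => (hfpos q).ne').sub continuous_const)
    obtain ⟨b, c, hbc⟩ := exists_dotProduct_add_dotProduct L
    refine ⟨Real.log (f 0), δ, b, c, fun p ς => ?_⟩
    rw [← Real.exp_log (hfpos (p, ς)), hEβ (p, ς)]
    congr 1
    linarith [hL (p, ς), hbc p ς]
  · rintro ⟨a, δ, b, c, hf⟩ p₁ ς₁ p₂ ς₂ p₁' ς₁' p₂' ς₂' hp hς hE'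
    have hb := congrArg (b ⬝ᵥ ·) hp
    have hc := congrArg (c ⬝ᵥ ·) hς
    simp only [dotProduct_add] at hb hc
    simp only [hf, ← Real.exp_add]
    congr 1
    linear_combination hb + hc + δ * hE'
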